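/- With P = Wᵀ W + σ² I_q, the matrix (W P⁻¹ Wᵀ) Σ (W P⁻¹ Wᵀ)ᵀ + σ² · W P⁻¹ Wᵀ + σ² I_d equals U Λ″ Uᵀ, where Λ″ is the d×d diagonal matrix whose i-th diagonal entry is (λ_i − σ²)²/λ_i + σ²(λ_i − σ²)/λ_i + σ² for 1 ≤ i ≤ q and σ² for q < i ≤ d. (This is the covariance of P-PCA generative adversarial examples under the posterior-sampling strategy, strategy 2.) -/

import Mathlib

open Matrix

/-!
Since `Uq` has orthonormal columns and `W = Uq D` with `D` diagonal, `Wᵀ W + σ² I = D² + σ² I`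
is diagonal with entries `λ_i`, so `W P⁻¹ Wᵀ = U F Uᵀ` where `F` is diagonal with entries
`(λ_i − σ²)/λ_i` for `i < q` and `0` otherwise. Every term of the covariance is then a
conjugate of a diagonal matrix by the orthogonal `U`, and the claim reduces to the scalar
identity `f² λ + σ² f + σ² = λ''` on each diagonal entry.
-/

namespace Matrix

variable {l m n R : Type*} [Fintype m]

theorem transpose_mul_self_submatrix_eq_one [DecidableEq m] [DecidableEq n] [CommRing R]
    {U : Matrix m m R} (hU : Uᵀ * U = 1) {e : n → m} (he : Function.Injective e) :
    (U.submatrix id e)ᵀ * U.submatrix id e = 1 := by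
  rw [transpose_submatrix, ← submatrix_mul _ _ _ _ _ Function.bijective_id, hU,
    submatrix_one e he]

theorem submatrix_mul_diagonal_mul_transpose [Fintype n] [DecidableEq m] [DecidableEq n]
    [CommRing R] {e : n → m} (he : Function.Injective e) (A B : Matrix l m R) (g : m → R) :
    A.submatrix id e * diagonal (g ∘ e) * (B.submatrix id e)ᵀ =
      A * diagonal ((Set.range e).indicator g) * Bᵀ := by
  ext i j
  rw [mul_apply, mul_apply]
  simp only [mul_diagonal, submatrix_apply, transpose_apply, id, Function.comp_apply]
  have hrange : Set.range e = ↑(Finset.univ.image e) := by simp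
  rw [← Finset.sum_image (f := fun x => A i x * g x * B j x) (fun x _ y _ h => he h), hrange,
    ← Finset.sum_indicator_subset _ (Finset.subset_univ _)]
  refine Finset.sum_congr rfl fun x _ => ?_
  simp only [Set.indicator_apply]
  split_ifs <;> simp

theorem mul_diagonal_mul_inv_mul_transpose [Fintype n] [DecidableEq n] [Field R]
    {V : Matrix m n R} (hV : Vᵀ * V = 1) (s : n → R) (c : R) (hs : ∀ j, s j ^ 2 + c ≠ 0) :
    V * diagonal s * ((V * diagonal s)ᵀ * (V * diagonal s) + c • 1)⁻¹ * (V * diagonal s)ᵀ =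
      V * diagonal (fun j => s j ^ 2 / (s j ^ 2 + c)) * Vᵀ := by
  have hP : (V * diagonal s)ᵀ * (V * diagonal s) + c • 1 = diagonal (fun j => s j ^ 2 + c) := by
    rw [transpose_mul, diagonal_transpose, Matrix.mul_assoc, ← Matrix.mul_assoc Vᵀ, hV,
      Matrix.one_mul, diagonal_mul_diagonal, ← diagonal_one, ← diagonal_smul, diagonal_add]
    simp [sq]
  have hPinv : (diagonal (fun j => s j ^ 2 + c))⁻¹ = diagonal (fun j => (s j ^ 2 + c)⁻¹) :=
    inv_eq_left_inv (by rw [diagonal_mul_diagonal]; simp [hs])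
  rw [hP, hPinv, transpose_mul, diagonal_transpose, Matrix.mul_assoc (V * _),
    ← Matrix.mul_assoc (diagonal _), diagonal_mul_diagonal, Matrix.mul_assoc V,
    ← Matrix.mul_assoc (diagonal _), diagonal_mul_diagonal, ← Matrix.mul_assoc]
  congr 3
  ext j
  ring

theorem conj_mul_conj [DecidableEq m] [CommRing R] {U : Matrix m m R} (hU : Uᵀ * U = 1)
    (A B : Matrix m m R) : U * A * Uᵀ * (U * B * Uᵀ) = U * (A * B) * Uᵀ := by
  simp only [Matrix.mul_assoc, ← Matrix.mul_assoc Uᵀ, hU, Matrix.one_mul]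

theorem transpose_conj [CommRing R] (U A : Matrix m m R) : (U * A * Uᵀ)ᵀ = U * Aᵀ * Uᵀ := by
  rw [transpose_mul, transpose_mul, transpose_transpose, Matrix.mul_assoc]

theorem conj_diagonal_mul_conj_diagonal_mul_transpose_add [DecidableEq m] [CommRing R]
    {U : Matrix m m R} (hU₁ : U * Uᵀ = 1) (hU₂ : Uᵀ * U = 1) (a b : m → R) (c : R) :
    U * diagonal a * Uᵀ * (U * diagonal b * Uᵀ) * (U * diagonal a * Uᵀ)ᵀ +
        c • (U * diagonal a * Uᵀ) + c • 1 =
      U * diagonal (fun i => a i ^ 2 * b i + c * a i + c) * Uᵀ := by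
  have hdiag : diagonal (fun i => a i ^ 2 * b i + c * a i + c) =
      diagonal a * diagonal b * diagonal a + c • diagonal a + c • 1 := by
    rw [diagonal_mul_diagonal, diagonal_mul_diagonal, ← diagonal_smul, ← diagonal_one,
      ← diagonal_smul, diagonal_add, diagonal_add]
    congr 1
    ext i
    simp only [Pi.smul_apply, smul_eq_mul]
    ring
  rw [transpose_conj, diagonal_transpose, conj_mul_conj hU₂, conj_mul_conj hU₂, hdiag,
    Matrix.mul_add, Matrix.mul_add, Matrix.add_mul, Matrix.add_mul, Matrix.mul_smul,
    Matrix.smul_mul, Matrix.mul_smul, Matrix.smul_mul, Matrix.mul_one, hU₁]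

end Matrix

/-- Strategy 2 (posterior sampling) covariance of P-PCA generative adversarial examples:
with `P = Wᵀ W + σ² I_q`,
`(W P⁻¹ Wᵀ) Σ (W P⁻¹ Wᵀ)ᵀ + σ² (W P⁻¹ Wᵀ) + σ² I_d = U Λ'' Uᵀ` with `Λ''` diagonal with
entries `(λ_i − σ²)²/λ_i + σ²(λ_i − σ²)/λ_i + σ²` for `i ≤ q` and `σ²` otherwise. -/
theorem strategy2_covariance
    (d q : ℕ) (hq1 : 1 ≤ q) (hqd : q ≤ d)
    (U : Matrix (Fin d) (Fin d) ℝ)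
    (hU : U * Uᵀ = 1 ∧ Uᵀ * U = 1)
    (lam : Fin d → ℝ)
    (hlam_pos : ∀ i, 0 < lam i)
    (hlam_anti : ∀ i j : Fin d, i ≤ j → lam j ≤ lam i)
    (σ2 : ℝ)
    (hσ2_lt : σ2 < lam ⟨q - 1, by omega⟩)
    (Sig : Matrix (Fin d) (Fin d) ℝ)
    (hSig : Sig = U * diagonal lam * Uᵀ)
    (Uq : Matrix (Fin d) (Fin q) ℝ)
    (hUq : ∀ i j, Uq i j = U i (Fin.castLE hqd j))
    (W : Matrix (Fin d) (Fin q) ℝ)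
    (hW : W = Uq * diagonal (fun j : Fin q => Real.sqrt (lam (Fin.castLE hqd j) - σ2)))
    (P : Matrix (Fin q) (Fin q) ℝ)
    (hP : P = Wᵀ * W + σ2 • (1 : Matrix (Fin q) (Fin q) ℝ)) :
    (W * P⁻¹ * Wᵀ) * Sig * (W * P⁻¹ * Wᵀ)ᵀ + σ2 • (W * P⁻¹ * Wᵀ) +
        σ2 • (1 : Matrix (Fin d) (Fin d) ℝ) =
      U * diagonal (fun i : Fin d =>
        if (i : ℕ) < q then (lam i - σ2) ^ 2 / lam i + σ2 * (lam i - σ2) / lam i + σ2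
        else σ2) * Uᵀ := by
  obtain rfl : Uq = U.submatrix id (Fin.castLE hqd) := Matrix.ext hUq
  have hσ2_le (j : Fin q) : σ2 ≤ lam (Fin.castLE hqd j) :=
    hσ2_lt.le.trans (hlam_anti _ _ (Fin.le_def.2 (Nat.le_sub_one_of_lt j.isLt)))
  have hsq (j : Fin q) :
      Real.sqrt (lam (Fin.castLE hqd j) - σ2) ^ 2 = lam (Fin.castLE hqd j) - σ2 :=
    Real.sq_sqrt (sub_nonneg.2 (hσ2_le j))
  have hM : W * P⁻¹ * Wᵀ =
      U * diagonal ((Set.range (Fin.castLE hqd)).indicator fun i => (lam i - σ2) / lam i) *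
        Uᵀ := by
    rw [hP, hW, mul_diagonal_mul_inv_mul_transpose
      (transpose_mul_self_submatrix_eq_one hU.2 (Fin.castLE_injective hqd)) _ _
      fun j => by rw [hsq, sub_add_cancel]; exact (hlam_pos _).ne']
    simp only [hsq, sub_add_cancel]
    rw [← submatrix_mul_diagonal_mul_transpose (Fin.castLE_injective hqd) U U]
    rfl
  rw [hM, hSig, conj_diagonal_mul_conj_diagonal_mul_transpose_add hU.1 hU.2, Fin.range_castLE]
  refine congrArg (fun D => U * diagonal D * Uᵀ) (funext fun i => ?_)
  by_cases hi : (i : ℕ) < q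
  · have hlam_ne := (hlam_pos i).ne'
    simp only [Set.indicator_of_mem (show i ∈ {i : Fin d | (i : ℕ) < q} from hi), if_pos hi]
    field_simp
  · simp [hi]
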